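/- In a real Hilbert space H, for f₁,…,f_N ∈ H, c ∈ ℝᴺ and λ > 0 with Gram matrix S invertible, the function h ↦ ‖h‖² + λ Σᵢ(⟨fᵢ,h⟩ - cᵢ)² attains its minimum at h = Σᵢ αᵢfᵢ with α = (S + I/λ)⁻¹ c. -/

import Mathlib

open Matrix
open scoped InnerProductSpace

/-!
Write `J h = ‖h‖² + λ Σᵢ (⟪fᵢ, h⟫ - cᵢ)²` and `h₀ = Σᵢ αᵢ fᵢ`. The equation `(S + I/λ) α = c` says
exactly that `αᵢ = -λ (⟪fᵢ, h₀⟫ - cᵢ)`, i.e. that the gradient `2h₀ + 2λ Σᵢ (⟪fᵢ, h₀⟫ - cᵢ) fᵢ`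
of `J` vanishes at `h₀`. Since `J` is a quadratic, expanding around `h₀` then gives
`J (h₀ + d) = J h₀ + ‖d‖² + λ Σᵢ ⟪fᵢ, d⟫² ≥ J h₀`. The matrix `S + I/λ` is invertible because
it is the sum of the positive semidefinite Gram matrix and a positive multiple of `I`.
-/

section Tikhonov

variable {H : Type*} [NormedAddCommGroup H] [InnerProductSpace ℝ H]
  {ι : Type*} [Fintype ι]

lemma inner_sum_smul_eq_gram_mulVec {𝕜 E : Type*} [RCLike 𝕜] [SeminormedAddCommGroup E]
    [InnerProductSpace 𝕜 E] (f : ι → E) (α : ι → 𝕜) (i : ι) :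
    ⟪f i, ∑ j, α j • f j⟫_𝕜 = (gram 𝕜 f *ᵥ α) i := by
  simp [inner_sum, inner_smul_right, mulVec, dotProduct, mul_comm]

def tikhonovObjective (f : ι → H) (c : ι → ℝ) (lam : ℝ) (h : H) : ℝ :=
  ‖h‖ ^ 2 + lam * ∑ i, (⟪f i, h⟫_ℝ - c i) ^ 2

lemma tikhonovObjective_add_of_stationary (f : ι → H) (c α : ι → ℝ) (lam : ℝ)
    (hα : ∀ i, α i + lam * (⟪f i, ∑ j, α j • f j⟫_ℝ - c i) = 0) (d : H) :
    tikhonovObjective f c lam (∑ j, α j • f j + d) =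
      tikhonovObjective f c lam (∑ j, α j • f j) + ‖d‖ ^ 2 + lam * ∑ i, ⟪f i, d⟫_ℝ ^ 2 := by
  set h₀ := ∑ j, α j • f j
  have hcross : ⟪h₀, d⟫_ℝ + lam * ∑ i, (⟪f i, h₀⟫_ℝ - c i) * ⟪f i, d⟫_ℝ = 0 := by
    have hh₀d : ⟪h₀, d⟫_ℝ = ∑ i, α i * ⟪f i, d⟫_ℝ := by
      simp only [h₀, sum_inner, real_inner_smul_left]
    rw [hh₀d, Finset.mul_sum, ← Finset.sum_add_distrib]
    refine Finset.sum_eq_zero fun i _ => ?_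
    linear_combination ⟪f i, d⟫_ℝ * hα i
  have hsum : ∑ i, (⟪f i, h₀ + d⟫_ℝ - c i) ^ 2 = ∑ i, (⟪f i, h₀⟫_ℝ - c i) ^ 2 +
      2 * ∑ i, (⟪f i, h₀⟫_ℝ - c i) * ⟪f i, d⟫_ℝ + ∑ i, ⟪f i, d⟫_ℝ ^ 2 := by
    rw [Finset.mul_sum, ← Finset.sum_add_distrib, ← Finset.sum_add_distrib]
    refine Finset.sum_congr rfl fun i _ => ?_
    rw [inner_add_right]
    ring
  unfold tikhonovObjective
  rw [norm_add_sq_real, hsum]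
  linear_combination 2 * hcross

lemma tikhonovObjective_le_of_stationary (f : ι → H) (c α : ι → ℝ) {lam : ℝ} (hlam : 0 ≤ lam)
    (hα : ∀ i, α i + lam * (⟪f i, ∑ j, α j • f j⟫_ℝ - c i) = 0) (h : H) :
    tikhonovObjective f c lam (∑ j, α j • f j) ≤ tikhonovObjective f c lam h := by
  obtain ⟨d, rfl⟩ : ∃ d, h = ∑ j, α j • f j + d := ⟨h - ∑ j, α j • f j, by abel⟩
  rw [tikhonovObjective_add_of_stationary f c α lam hα d]
  have : 0 ≤ lam * ∑ i, ⟪f i, d⟫_ℝ ^ 2 := by positivity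
  nlinarith [sq_nonneg ‖d‖]

lemma stationary_of_gram_add_smul_one_mulVec [DecidableEq ι] (f : ι → H) (c α : ι → ℝ)
    {lam : ℝ} (hlam : lam ≠ 0) (hα : (gram ℝ f + lam⁻¹ • (1 : Matrix ι ι ℝ)) *ᵥ α = c) (i : ι) :
    α i + lam * (⟪f i, ∑ j, α j • f j⟫_ℝ - c i) = 0 := by
  have hi := congrFun hα i
  simp only [add_mulVec, smul_mulVec, one_mulVec, Pi.add_apply, Pi.smul_apply,
    smul_eq_mul] at hi
  rw [inner_sum_smul_eq_gram_mulVec, ← hi]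
  field_simp
  ring

lemma gram_add_smul_one_posDef [DecidableEq ι] (f : ι → H) {t : ℝ} (ht : 0 < t) :
    (gram ℝ f + t • (1 : Matrix ι ι ℝ)).PosDef :=
  PosDef.posSemidef_add (posSemidef_gram ℝ f) (PosDef.one.smul ht)

end Tikhonov

theorem gram_inexact_interpolation_general
    {H : Type*} [NormedAddCommGroup H] [InnerProductSpace ℝ H]
    (N : ℕ) (f : Fin N → H) (c : Fin N → ℝ) (lam : ℝ) (hlam : 0 < lam)
    (S : Matrix (Fin N) (Fin N) ℝ) (hS : ∀ i j, S i j = ⟪f i, f j⟫_ℝ)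
    (h₀ : H) (hh₀ : h₀ = ∑ i, ((S + lam⁻¹ • (1 : Matrix (Fin N) (Fin N) ℝ))⁻¹ *ᵥ c) i • f i) :
    ∀ h : H,
      ‖h₀‖ ^ 2 + lam * ∑ i, (⟪f i, h₀⟫_ℝ - c i) ^ 2 ≤
        ‖h‖ ^ 2 + lam * ∑ i, (⟪f i, h⟫_ℝ - c i) ^ 2 := by
  obtain rfl : S = gram ℝ f := Matrix.ext hS
  set A := gram ℝ f + lam⁻¹ • (1 : Matrix (Fin N) (Fin N) ℝ)
  have hA : IsUnit A.det :=
    (isUnit_iff_isUnit_det A).mp (gram_add_smul_one_posDef f (inv_pos.mpr hlam)).isUnit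
  have hα : A *ᵥ (A⁻¹ *ᵥ c) = c := by
    rw [mulVec_mulVec, mul_nonsing_inv A hA, one_mulVec]
  subst hh₀
  exact tikhonovObjective_le_of_stationary f c _ hlam.le
    (stationary_of_gram_add_smul_one_mulVec f c _ hlam.ne' hα)

/-- Inexact interpolation in a real Hilbert space: for `λ > 0` and invertible
Gram matrix `S`, the function `h ↦ ‖h‖² + λ Σ (⟪fᵢ, h⟫ - cᵢ)²` attains its
minimum at `h = Σ αᵢ fᵢ` with `α = (S + I/λ)⁻¹ c`. -/
theorem gram_inexact_interpolation
    {H : Type*} [NormedAddCommGroup H] [InnerProductSpace ℝ H] [CompleteSpace H]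
    (N : ℕ) (f : Fin N → H) (c : Fin N → ℝ) (lam : ℝ) (hlam : 0 < lam)
    (S : Matrix (Fin N) (Fin N) ℝ) (hS : ∀ i j, S i j = ⟪f i, f j⟫_ℝ)
    (hinv : IsUnit S.det)
    (h₀ : H) (hh₀ : h₀ = ∑ i, ((S + lam⁻¹ • (1 : Matrix (Fin N) (Fin N) ℝ))⁻¹ *ᵥ c) i • f i) :
    ∀ h : H,
      ‖h₀‖ ^ 2 + lam * ∑ i, (⟪f i, h₀⟫_ℝ - c i) ^ 2 ≤
        ‖h‖ ^ 2 + lam * ∑ i, (⟪f i, h⟫_ℝ - c i) ^ 2 :=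
  gram_inexact_interpolation_general N f c lam hlam S hS h₀ hh₀
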